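/- arXiv:2107.04258 — 7 statements merged into one kernel-verified Lean document; each statement's English description precedes it below -/
import Mathlib

section
/- With notation as above, an element a ∈ A lies in I⊥ if and only if for all h ∈ I one has τ(a₍₁₎, S⁻¹(h)) a₍₂₎ = ε(h) a. -/
open scoped TensorProduct
open Coalgebra

namespace Stmt1Aux

variable {R B : Type*} {ι : Type*} [CommSemiring R] [Semiring B] [HopfAlgebra R B]

lemma sum_counit_smul' {u : B} (r : Repr R u ι) :
    ∑ i ∈ r.index, counit (R := R) (r.left i) • r.right i = u := by
  have h := sum_counit_tmul_eq r
  apply_fun (TensorProduct.lid R B) at h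
  simpa only [map_sum, TensorProduct.lid_tmul, one_smul] using h

lemma sum_smul_counit {u : B} (r : Repr R u ι) :
    ∑ i ∈ r.index, counit (R := R) (r.right i) • r.left i = u := by
  have h := sum_tmul_counit_eq r
  apply_fun (TensorProduct.rid R B) at h
  simpa only [map_sum, TensorProduct.rid_tmul, one_smul] using h

/-- Sweedler: `∑ S(u₍₁₎) u₍₂₎ ⊗ u₍₃₎ = 1 ⊗ u`, with the `(id ⊗ Δ) ∘ Δ` legs. -/
lemma sum_antipode_mul_tmul {u : B} (r : Repr R u ι)
    (rr : ∀ i : ι, Repr R (r.right i) (B × B)) :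
    ∑ i ∈ r.index, ∑ j ∈ (rr i).index,
      (HopfAlgebra.antipode (R := R) (r.left i) * (rr i).left j) ⊗ₜ[R] (rr i).right j
      = (1 : B) ⊗ₜ[R] u := by
  have hco := Coalgebra.sum_tmul_tmul_eq r (fun i => ℛ R (r.left i)) rr
  set g : B ⊗[R] (B ⊗[R] B) →ₗ[R] B ⊗[R] B :=
    (TensorProduct.map (LinearMap.mul' R B ∘ₗ
        (HopfAlgebra.antipode (R := R) (A := B)).rTensor B) LinearMap.id)
      ∘ₗ (TensorProduct.assoc R B B B).symm.toLinearMap with hg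
  have happ := congrArg g hco
  simp only [map_sum, hg, LinearMap.comp_apply, LinearEquiv.coe_coe,
    TensorProduct.assoc_symm_tmul, TensorProduct.map_tmul, LinearMap.rTensor_tmul,
    LinearMap.mul'_apply, LinearMap.id_coe, id_eq] at happ
  rw [← happ]
  calc ∑ i ∈ r.index, ∑ j ∈ (ℛ R (r.left i)).index,
        (HopfAlgebra.antipode (R := R) ((ℛ R (r.left i)).left j) *
          (ℛ R (r.left i)).right j) ⊗ₜ[R] r.right i
      = ∑ i ∈ r.index, (algebraMap R B (counit (R := R) (r.left i))) ⊗ₜ[R] r.right i := by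
        refine Finset.sum_congr rfl fun i _ => ?_
        rw [← TensorProduct.sum_tmul, HopfAlgebra.sum_antipode_mul_eq_algebraMap_counit]
    _ = (1 : B) ⊗ₜ[R] u := by
        simp only [Algebra.algebraMap_eq_smul_one, TensorProduct.smul_tmul]
        rw [← TensorProduct.tmul_sum, sum_counit_smul']

local notation "𝑺" => HopfAlgebra.antipode (R := R) (A := B)

lemma antipode_mul' (x y : B) :
    HopfAlgebra.antipode (R := R) (x * y) =
      HopfAlgebra.antipode (R := R) y * HopfAlgebra.antipode (R := R) x := by
  classical
  set r := ℛ R x with hr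
  set s := ℛ R y with hs
  set rr : ∀ i : r.ι, Repr R (r.right i) (B × B) := fun i => ℛ R (r.right i) with hrr
  set ss : ∀ k : s.ι, Repr R (s.right k) (B × B) := fun k => ℛ R (s.right k) with hss
  have hx := sum_antipode_mul_tmul r rr
  have hy := sum_antipode_mul_tmul s ss
  set M : B := ∑ k ∈ s.index, ∑ l ∈ (ss k).index, ∑ i ∈ r.index, ∑ j ∈ (rr i).index,
      𝑺 (s.left k) * ((𝑺 (r.left i) * (rr i).left j) *
        ((ss k).left l * 𝑺 ((rr i).right j * (ss k).right l))) with hM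
  have hM1 : M = 𝑺 (x * y) := by
    have hinner : ∀ k, ∀ l,
        ∑ i ∈ r.index, ∑ j ∈ (rr i).index,
          ((𝑺 (r.left i) * (rr i).left j) *
            ((ss k).left l * 𝑺 ((rr i).right j * (ss k).right l)))
        = (ss k).left l * 𝑺 (x * (ss k).right l) := by
      intro k l
      set ψ : B ⊗[R] B →ₗ[R] B := TensorProduct.lift
        (LinearMap.mk₂ R (fun d e => d * ((ss k).left l * 𝑺 (e * (ss k).right l)))
          (fun d₁ d₂ e => by simp [add_mul])
          (fun c d e => by simp [smul_mul_assoc])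
          (fun d e₁ e₂ => by simp [add_mul, mul_add])
          (fun c d e => by simp [smul_mul_assoc, mul_smul_comm])) with hψ
      have h := congrArg ψ hx
      simp only [map_sum, hψ, TensorProduct.lift.tmul, LinearMap.mk₂_apply] at h
      simpa [one_mul] using h
    have hstep : M = ∑ k ∈ s.index, ∑ l ∈ (ss k).index,
        𝑺 (s.left k) * ((ss k).left l * 𝑺 (x * (ss k).right l)) := by
      rw [hM]
      refine Finset.sum_congr rfl fun k _ => Finset.sum_congr rfl fun l _ => ?_
      rw [← hinner k l]
      simp only [Finset.mul_sum]
    rw [hstep]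
    set φ : B ⊗[R] B →ₗ[R] B := TensorProduct.lift
      (LinearMap.mk₂ R (fun d e => d * 𝑺 (x * e))
        (fun d₁ d₂ e => by simp [add_mul])
        (fun c d e => by simp [smul_mul_assoc])
        (fun d e₁ e₂ => by simp [mul_add])
        (fun c d e => by simp [mul_smul_comm])) with hφ
    have h := congrArg φ hy
    simp only [map_sum, hφ, TensorProduct.lift.tmul, LinearMap.mk₂_apply] at h
    simp only [mul_assoc] at h ⊢
    simpa [one_mul] using h
  have hM2 : M = 𝑺 y * 𝑺 x := by
    have hcomm : M = ∑ k ∈ s.index, ∑ i ∈ r.index, ∑ l ∈ (ss k).index, ∑ j ∈ (rr i).index,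
        𝑺 (s.left k) * ((𝑺 (r.left i) * (rr i).left j) *
          ((ss k).left l * 𝑺 ((rr i).right j * (ss k).right l))) := by
      rw [hM]
      exact Finset.sum_congr rfl fun k _ => Finset.sum_comm ..
    have hik : ∀ k, ∀ i, ∑ l ∈ (ss k).index, ∑ j ∈ (rr i).index,
        𝑺 (s.left k) * ((𝑺 (r.left i) * (rr i).left j) *
          ((ss k).left l * 𝑺 ((rr i).right j * (ss k).right l)))
        = (counit (R := R) (s.right k) • 𝑺 (s.left k)) *
            (counit (R := R) (r.right i) • 𝑺 (r.left i)) := by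
      intro k i
      have hkey : ∑ j ∈ (rr i).index, ∑ l ∈ (ss k).index,
          ((rr i).left j * (ss k).left l) * 𝑺 ((rr i).right j * (ss k).right l)
          = algebraMap R B (counit (R := R) (r.right i * s.right k)) := by
        have h0 := HopfAlgebra.sum_mul_antipode_eq_algebraMap_counit (R := R)
          (⟨(rr i).index ×ˢ (ss k).index,
            fun p => (rr i).left p.1 * (ss k).left p.2,
            fun p => (rr i).right p.1 * (ss k).right p.2, by
              rw [Finset.sum_product, Bialgebra.comul_mul, ← (rr i).eq, ← (ss k).eq,
                Finset.sum_mul_sum]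
              exact Finset.sum_congr rfl fun j _ => Finset.sum_congr rfl fun l _ =>
                (Algebra.TensorProduct.tmul_mul_tmul _ _ _ _).symm⟩ :
            Repr R (r.right i * s.right k) ((B × B) × (B × B)))
        simpa [Finset.sum_product] using h0
      calc ∑ l ∈ (ss k).index, ∑ j ∈ (rr i).index,
            𝑺 (s.left k) * ((𝑺 (r.left i) * (rr i).left j) *
              ((ss k).left l * 𝑺 ((rr i).right j * (ss k).right l)))
          = ∑ j ∈ (rr i).index, ∑ l ∈ (ss k).index,
            (𝑺 (s.left k) * 𝑺 (r.left i)) *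
              (((rr i).left j * (ss k).left l) * 𝑺 ((rr i).right j * (ss k).right l)) := by
            rw [Finset.sum_comm]
            exact Finset.sum_congr rfl fun j _ => Finset.sum_congr rfl fun l _ => by
              simp only [mul_assoc]
        _ = (𝑺 (s.left k) * 𝑺 (r.left i)) *
              algebraMap R B (counit (R := R) (r.right i * s.right k)) := by
            simp only [← Finset.mul_sum]
            rw [hkey]
        _ = (counit (R := R) (s.right k) • 𝑺 (s.left k)) *
              (counit (R := R) (r.right i) • 𝑺 (r.left i)) := by
            simp [Bialgebra.counit_mul, Algebra.algebraMap_eq_smul_one, mul_smul_comm,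
              smul_mul_assoc, smul_smul, mul_comm]
    have hSy : 𝑺 y = ∑ k ∈ s.index, counit (R := R) (s.right k) • 𝑺 (s.left k) := by
      conv_lhs => rw [← sum_smul_counit s]
      rw [map_sum]; simp only [map_smul]
    have hSx : 𝑺 x = ∑ i ∈ r.index, counit (R := R) (r.right i) • 𝑺 (r.left i) := by
      conv_lhs => rw [← sum_smul_counit r]
      rw [map_sum]; simp only [map_smul]
    rw [hcomm, hSy, hSx, Finset.sum_mul_sum]
    exact Finset.sum_congr rfl fun k _ => Finset.sum_congr rfl fun i _ => hik k i
  exact hM1.symm.trans hM2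

lemma antipode_one' : HopfAlgebra.antipode (R := R) (1 : B) = 1 := by
  have h := HopfAlgebra.sum_antipode_mul_eq_algebraMap_counit (R := R)
    (⟨({0} : Finset ℕ), fun _ => 1, fun _ => 1,
      by simp [Algebra.TensorProduct.one_def]⟩ : Repr R (1 : B) ℕ)
  simpa using h

lemma cop_antipode_left {Sinv : B →ₗ[R] B}
    (hS1 : ∀ h : B, Sinv (HopfAlgebra.antipode (R := R) h) = h)
    (hS2 : ∀ h : B, HopfAlgebra.antipode (R := R) (Sinv h) = h)
    {h : B} (r : Repr R h ι) :
    ∑ i ∈ r.index, Sinv (r.right i) * r.left i = counit (R := R) h • (1 : B) := by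
  have hinj : Function.Injective (HopfAlgebra.antipode (R := R) (A := B)) :=
    Function.LeftInverse.injective (g := Sinv) hS1
  refine hinj ?_
  rw [map_sum, map_smul, antipode_one']
  calc ∑ i ∈ r.index, 𝑺 (Sinv (r.right i) * r.left i)
      = ∑ i ∈ r.index, 𝑺 (r.left i) * r.right i := by
        refine Finset.sum_congr rfl fun i _ => ?_
        rw [antipode_mul', hS2]
    _ = counit (R := R) h • (1 : B) := by
        rw [HopfAlgebra.sum_antipode_mul_eq_algebraMap_counit r, Algebra.algebraMap_eq_smul_one]

lemma cop_antipode_right {Sinv : B →ₗ[R] B}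
    (hS1 : ∀ h : B, Sinv (HopfAlgebra.antipode (R := R) h) = h)
    (hS2 : ∀ h : B, HopfAlgebra.antipode (R := R) (Sinv h) = h)
    {h : B} (r : Repr R h ι) :
    ∑ i ∈ r.index, r.right i * Sinv (r.left i) = counit (R := R) h • (1 : B) := by
  have hinj : Function.Injective (HopfAlgebra.antipode (R := R) (A := B)) :=
    Function.LeftInverse.injective (g := Sinv) hS1
  refine hinj ?_
  rw [map_sum, map_smul, antipode_one']
  calc ∑ i ∈ r.index, 𝑺 (r.right i * Sinv (r.left i))
      = ∑ i ∈ r.index, r.left i * 𝑺 (r.right i) := by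
        refine Finset.sum_congr rfl fun i _ => ?_
        rw [antipode_mul', hS2]
    _ = counit (R := R) h • (1 : B) := by
        rw [HopfAlgebra.sum_mul_antipode_eq_algebraMap_counit r, Algebra.algebraMap_eq_smul_one]

section Pairing

variable {A U : Type} [Ring A] [HopfAlgebra ℂ A] [Ring U] [HopfAlgebra ℂ U]
variable (τ : A →ₗ[ℂ] U →ₗ[ℂ] ℂ)

/-- The translation operator `a ↦ ∑ τ(a₍₁₎, h) a₍₂₎`. -/
noncomputable def Efun (h : U) (c : A) : A :=
  TensorProduct.lift ((LinearMap.lsmul ℂ A) ∘ₗ (τ.flip h)) (comul (R := ℂ) c)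

lemma Efun_repr (h : U) {c : A} (r : Repr ℂ c ι) :
    Efun τ h c = ∑ i ∈ r.index, τ (r.left i) h • r.right i := by
  rw [Efun, ← r.eq, map_sum]
  simp [TensorProduct.lift.tmul]

lemma Efun_smul_right (h : U) (t : ℂ) (c : A) : Efun τ h (t • c) = t • Efun τ h c := by
  rw [Efun, Efun, map_smul, map_smul]

lemma Efun_add (u v : U) (c : A) : Efun τ (u + v) c = Efun τ u c + Efun τ v c := by
  rw [Efun_repr τ _ (ℛ ℂ c), Efun_repr τ u (ℛ ℂ c), Efun_repr τ v (ℛ ℂ c),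
    ← Finset.sum_add_distrib]
  exact Finset.sum_congr rfl fun i _ => by simp [map_add, add_smul]

lemma Efun_smul (t : ℂ) (u : U) (c : A) : Efun τ (t • u) c = t • Efun τ u c := by
  rw [Efun_repr τ _ (ℛ ℂ c), Efun_repr τ u (ℛ ℂ c), Finset.smul_sum]
  exact Finset.sum_congr rfl fun i _ => by simp [map_smul, mul_smul]

lemma Efun_one (hτ_oneU : ∀ c : A, τ c 1 = counit (R := ℂ) c) (c : A) :
    Efun τ 1 c = c := by
  rw [Efun_repr τ 1 (ℛ ℂ c)]
  simp_rw [hτ_oneU]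
  exact sum_counit_smul' (ℛ ℂ c)

lemma Efun_comp
    (hτ_mulU : ∀ (a : A) (h k : U), τ a (h * k) =
      ((LinearMap.mul' ℂ ℂ) ∘ₗ TensorProduct.map (τ.flip h) (τ.flip k))
        (comul (R := ℂ) a))
    (x y : U) (c : A) :
    Efun τ x (Efun τ y c) = Efun τ (y * x) c := by
  classical
  set r := ℛ ℂ c with hrdef
  set r1 : ∀ i : r.ι, Repr ℂ (r.left i) (A × A) := fun i => ℛ ℂ (r.left i) with hr1
  set r2 : ∀ i : r.ι, Repr ℂ (r.right i) (A × A) := fun i => ℛ ℂ (r.right i) with hr2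
  set L : A →ₗ[ℂ] A :=
    (TensorProduct.lift ((LinearMap.lsmul ℂ A) ∘ₗ (τ.flip x))) ∘ₗ comul with hLdef
  have hLE : ∀ z, L z = Efun τ x z := fun z => rfl
  have hlhs : Efun τ x (Efun τ y c) = ∑ i ∈ r.index, ∑ j ∈ (r2 i).index,
      τ (r.left i) y • (τ ((r2 i).left j) x • (r2 i).right j) := by
    rw [Efun_repr τ y r, ← hLE, map_sum]
    refine Finset.sum_congr rfl fun i _ => ?_
    rw [map_smul, hLE, Efun_repr τ x (r2 i), Finset.smul_sum]
  have hrhs : Efun τ (y * x) c = ∑ i ∈ r.index, ∑ j ∈ (r1 i).index,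
      τ ((r1 i).left j) y • (τ ((r1 i).right j) x • r.right i) := by
    rw [Efun_repr τ (y * x) r]
    refine Finset.sum_congr rfl fun i _ => ?_
    rw [hτ_mulU (r.left i) y x, LinearMap.comp_apply, ← (r1 i).eq, map_sum, map_sum]
    simp [TensorProduct.map_tmul, LinearMap.mul'_apply, Finset.sum_smul, mul_smul]
  have hco := Coalgebra.sum_tmul_tmul_eq r r1 r2
  set Lx : A ⊗[ℂ] A →ₗ[ℂ] A :=
    TensorProduct.lift ((LinearMap.lsmul ℂ A) ∘ₗ (τ.flip x)) with hLx
  set Ξ : A ⊗[ℂ] (A ⊗[ℂ] A) →ₗ[ℂ] A := TensorProduct.lift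
    (LinearMap.mk₂ ℂ (fun c₁ w => τ c₁ y • Lx w)
      (fun a b w => by simp [map_add, add_smul])
      (fun t a w => by simp [map_smul, mul_smul])
      (fun a w₁ w₂ => by simp [map_add, smul_add])
      (fun t a w => by rw [map_smul]; exact smul_comm _ _ _)) with hΞ
  have happ := congrArg Ξ hco
  simp only [map_sum, hΞ, TensorProduct.lift.tmul, LinearMap.mk₂_apply, hLx,
    LinearMap.comp_apply, LinearMap.lsmul_apply, LinearMap.flip_apply] at happ
  rw [hlhs, hrhs]
  exact happ.symm

end Pairing

end Stmt1Aux

open Stmt1Aux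

/-- With `A`, `U` dually paired Hopf *-algebras and `I ⊆ U` a unital left coideal
*-subalgebra, an element `a ∈ A` lies in `I⊥` if and only if for all `h ∈ I` one has
`τ(a₍₁₎, S⁻¹(h)) a₍₂₎ = ε(h) a`. -/
theorem stmt1
    (A U : Type) [Ring A] [HopfAlgebra ℂ A] [StarRing A] [StarModule ℂ A]
    [Ring U] [HopfAlgebra ℂ U] [StarRing U] [StarModule ℂ U]
    (τ : A →ₗ[ℂ] U →ₗ[ℂ] ℂ)
    (hτ_mulU : ∀ (a : A) (h k : U), τ a (h * k) =
      ((LinearMap.mul' ℂ ℂ) ∘ₗ TensorProduct.map (τ.flip h) (τ.flip k))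
        (comul (R := ℂ) a))
    (hτ_mulA : ∀ (a b : A) (h : U), τ (a * b) h =
      ((LinearMap.mul' ℂ ℂ) ∘ₗ TensorProduct.map (τ a) (τ b)) (comul (R := ℂ) h))
    (hτ_oneA : ∀ h : U, τ 1 h = counit (R := ℂ) h)
    (hτ_oneU : ∀ a : A, τ a 1 = counit (R := ℂ) a)
    (hτ_starA : ∀ (a : A) (h : U), τ (star a) h =
      starRingEnd ℂ (τ a (star (HopfAlgebra.antipode (R := ℂ) h))))
    (hτ_starU : ∀ (a : A) (h : U), τ a (star h) =
      starRingEnd ℂ (τ (star (HopfAlgebra.antipode (R := ℂ) a)) h))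
    -- the antipode of `U` is invertible, with inverse `Sinv`
    (Sinv : U →ₗ[ℂ] U)
    (hSinv₁ : ∀ h : U, Sinv (HopfAlgebra.antipode (R := ℂ) h) = h)
    (hSinv₂ : ∀ h : U, HopfAlgebra.antipode (R := ℂ) (Sinv h) = h)
    -- `I` is a unital left coideal *-subalgebra of `U`
    (I : StarSubalgebra ℂ U)
    (hI : ∀ h ∈ I, comul (R := ℂ) h ∈ LinearMap.range
      (LinearMap.lTensor U (Subalgebra.toSubmodule I.toSubalgebra).subtype))
    (a : A) :
    (∀ h ∈ I,
        (TensorProduct.lift ((LinearMap.lsmul ℂ A) ∘ₗ (τ.flip h))) (comul (R := ℂ) a) =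
          counit (R := ℂ) h • a) ↔
      (∀ h ∈ I,
        (TensorProduct.lift ((LinearMap.lsmul ℂ A) ∘ₗ (τ.flip (Sinv h))))
            (comul (R := ℂ) a) =
          counit (R := ℂ) h • a) := by
  classical
  set EvalA : U →ₗ[ℂ] A :=
    { toFun := fun h => Efun τ h a
      map_add' := fun u v => Efun_add τ u v a
      map_smul' := fun t u => Efun_smul τ t u a } with hEvalA
  have hEval : ∀ h : U, EvalA h = Efun τ h a := fun _ => rfl
  constructor
  · intro H1 h hmem
    have H1' : ∀ k, k ∈ I → Efun τ k a = counit (R := ℂ) k • a := H1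
    show Efun τ (Sinv h) a = counit (R := ℂ) h • a
    obtain ⟨t, ht⟩ := hI h hmem
    obtain ⟨sfin, hsf⟩ := TensorProduct.exists_finset (R := ℂ) t
    have hch : comul (R := ℂ) h = ∑ p ∈ sfin, p.1 ⊗ₜ[ℂ] ((p.2 : U)) := by
      rw [← ht, hsf, map_sum]
      simp [LinearMap.lTensor_tmul]
    have hmem' : ∀ p : U × ↥(Subalgebra.toSubmodule I.toSubalgebra), (p.2 : U) ∈ I := by
      intro p
      have := p.2.2
      simpa using this
    have hsum : ∑ p ∈ sfin, counit (R := ℂ) ((p.2 : U)) • p.1 = h := by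
      simpa using sum_smul_counit
        (⟨sfin, fun p => p.1, fun p => ((p.2 : U)), hch.symm⟩ : Repr ℂ h (U × ↥(Subalgebra.toSubmodule I.toSubalgebra)))
    have hcop2 : ∑ p ∈ sfin, ((p.2 : U)) * Sinv p.1 = counit (R := ℂ) h • (1 : U) := by
      simpa using cop_antipode_right hSinv₁ hSinv₂
        (⟨sfin, fun p => p.1, fun p => ((p.2 : U)), hch.symm⟩ : Repr ℂ h (U × ↥(Subalgebra.toSubmodule I.toSubalgebra)))
    calc Efun τ (Sinv h) a
        = EvalA (Sinv (∑ p ∈ sfin, counit (R := ℂ) ((p.2 : U)) • p.1)) := by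
          rw [hsum, hEval]
      _ = ∑ p ∈ sfin, counit (R := ℂ) ((p.2 : U)) • EvalA (Sinv p.1) := by
          rw [map_sum, map_sum]
          exact Finset.sum_congr rfl fun p _ => by rw [map_smul, map_smul]
      _ = ∑ p ∈ sfin, EvalA ((p.2 : U) * Sinv p.1) := by
          refine Finset.sum_congr rfl fun p _ => ?_
          rw [hEval, hEval]
          calc counit (R := ℂ) ((p.2 : U)) • Efun τ (Sinv p.1) a
              = Efun τ (Sinv p.1) (counit (R := ℂ) ((p.2 : U)) • a) :=
                (Efun_smul_right τ _ _ a).symm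
            _ = Efun τ (Sinv p.1) (Efun τ ((p.2 : U)) a) := by
                rw [H1' _ (hmem' p)]
            _ = Efun τ ((p.2 : U) * Sinv p.1) a := Efun_comp τ hτ_mulU _ _ a
      _ = counit (R := ℂ) h • a := by
          rw [← map_sum, hcop2, map_smul, hEval, Efun_one τ hτ_oneU]
  · intro H2 h hmem
    have H2' : ∀ k, k ∈ I → Efun τ (Sinv k) a = counit (R := ℂ) k • a := H2
    show Efun τ h a = counit (R := ℂ) h • a
    obtain ⟨t, ht⟩ := hI h hmem
    obtain ⟨sfin, hsf⟩ := TensorProduct.exists_finset (R := ℂ) t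
    have hch : comul (R := ℂ) h = ∑ p ∈ sfin, p.1 ⊗ₜ[ℂ] ((p.2 : U)) := by
      rw [← ht, hsf, map_sum]
      simp [LinearMap.lTensor_tmul]
    have hmem' : ∀ p : U × ↥(Subalgebra.toSubmodule I.toSubalgebra), (p.2 : U) ∈ I := by
      intro p
      have := p.2.2
      simpa using this
    have hsum : ∑ p ∈ sfin, counit (R := ℂ) ((p.2 : U)) • p.1 = h := by
      simpa using sum_smul_counit
        (⟨sfin, fun p => p.1, fun p => ((p.2 : U)), hch.symm⟩ : Repr ℂ h (U × ↥(Subalgebra.toSubmodule I.toSubalgebra)))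
    have hcop1 : ∑ p ∈ sfin, Sinv ((p.2 : U)) * p.1 = counit (R := ℂ) h • (1 : U) := by
      simpa using cop_antipode_left hSinv₁ hSinv₂
        (⟨sfin, fun p => p.1, fun p => ((p.2 : U)), hch.symm⟩ : Repr ℂ h (U × ↥(Subalgebra.toSubmodule I.toSubalgebra)))
    calc Efun τ h a
        = EvalA (∑ p ∈ sfin, counit (R := ℂ) ((p.2 : U)) • p.1) := by
          rw [hsum, hEval]
      _ = ∑ p ∈ sfin, counit (R := ℂ) ((p.2 : U)) • EvalA p.1 := by
          rw [map_sum]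
          exact Finset.sum_congr rfl fun p _ => by rw [map_smul]
      _ = ∑ p ∈ sfin, EvalA (Sinv ((p.2 : U)) * p.1) := by
          refine Finset.sum_congr rfl fun p _ => ?_
          rw [hEval, hEval]
          calc counit (R := ℂ) ((p.2 : U)) • Efun τ p.1 a
              = Efun τ p.1 (counit (R := ℂ) ((p.2 : U)) • a) :=
                (Efun_smul_right τ _ _ a).symm
            _ = Efun τ p.1 (Efun τ (Sinv ((p.2 : U))) a) := by
                rw [H2' _ (hmem' p)]
            _ = Efun τ (Sinv ((p.2 : U)) * p.1) a := Efun_comp τ hτ_mulU _ _ a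
      _ = counit (R := ℂ) h • a := by
          rw [← map_sum, hcop1, map_smul, hEval, Efun_one τ hτ_oneU]
end

section
/- The unital *-algebra U_q(sl(2,ℝ)_t) generated by self-adjoint element Z_t, elements X_t, Y_t with X_t* = Y_t, and skew-adjoint element B_t (B_t* = −B_t) subject to X_tZ_t = q²Z_tX_t, Y_tZ_t = q⁻²Z_tY_t, X_tY_t = 1 − qtZ_t − q²Z_t², Y_tX_t = 1 − q⁻¹tZ_t − q⁻²Z_t², B_tX_t = q²X_tB_t + q((q+q⁻¹)Z_t + t), B_tY_t = q⁻²Y_tB_t + q⁻¹((q+q⁻¹)Z_t + t), and B_tZ_t = Z_tB_t − (X_t + Y_t), contains the element Ω_t := iq⁻¹X_t + (q−q⁻¹)iZ_tB_t − iqY_t, which is central and self-adjoint. -/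
set_option maxHeartbeats 1000000


/-- In the universal *-algebra `U_q(sl(2,ℝ)_t)` (any star ℂ-algebra with generators
`X, Y, Z, B` satisfying the defining relations), the Casimir element
`Ω = iq⁻¹X + (q−q⁻¹)iZB − iqY` is central and self-adjoint. -/
theorem stmt9 (q t : ℝ) (hq0 : 0 < q) (hq1 : q < 1)
    (D : Type*) [Ring D] [Algebra ℂ D] [StarRing D] [StarModule ℂ D]
    (X Y Z B : D)
    (hsX : star X = Y) (hsZ : star Z = Z) (hsB : star B = -B)
    (hXZ : X * Z = ((q : ℂ) ^ 2) • (Z * X))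
    (hYZ : Y * Z = (((q : ℂ) ^ 2)⁻¹) • (Z * Y))
    (hXY : X * Y = 1 - ((q * t : ℝ) : ℂ) • Z - ((q : ℂ) ^ 2) • (Z * Z))
    (hYX : Y * X = 1 - ((q⁻¹ * t : ℝ) : ℂ) • Z - (((q : ℂ) ^ 2)⁻¹) • (Z * Z))
    (hBX : B * X = ((q : ℂ) ^ 2) • (X * B) +
      (q : ℂ) • (((q : ℂ) + (q : ℂ)⁻¹) • Z + (t : ℂ) • (1 : D)))
    (hBY : B * Y = (((q : ℂ) ^ 2)⁻¹) • (Y * B) +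
      (q : ℂ)⁻¹ • (((q : ℂ) + (q : ℂ)⁻¹) • Z + (t : ℂ) • (1 : D)))
    (hBZ : B * Z = Z * B - (X + Y)) :
    let Ω : D := (Complex.I * (q : ℂ)⁻¹) • X +
      (Complex.I * ((q : ℂ) - (q : ℂ)⁻¹)) • (Z * B) - (Complex.I * (q : ℂ)) • Y
    star Ω = Ω ∧ Commute Ω X ∧ Commute Ω Y ∧ Commute Ω Z ∧ Commute Ω B := by
  intro Ω
  have hq : (q : ℂ) ≠ 0 := by exact_mod_cast hq0.ne'
  push_cast at hXY hYX
  have hsY : star Y = X := by rw [← hsX, star_star]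
  have h1 : Z * B * X = ((q:ℂ)^2) • (Z * (X * B)) + ((q:ℂ) * ((q:ℂ) + (q:ℂ)⁻¹)) • (Z * Z)
      + ((q:ℂ) * t) • Z := by
    rw [mul_assoc, hBX]
    simp only [mul_add, mul_smul_comm, smul_smul, smul_add, mul_one]
    module
  have h2 : X * (Z * B) = ((q:ℂ)^2) • (Z * (X * B)) := by
    rw [← mul_assoc, hXZ, smul_mul_assoc, mul_assoc]
  have h3 : Z * B * Y = (((q:ℂ)^2)⁻¹) • (Z * (Y * B)) + ((q:ℂ)⁻¹ * ((q:ℂ) + (q:ℂ)⁻¹)) • (Z * Z)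
      + ((q:ℂ)⁻¹ * t) • Z := by
    rw [mul_assoc, hBY]
    simp only [mul_add, mul_smul_comm, smul_smul, smul_add, mul_one]
    module
  have h4 : Y * (Z * B) = (((q:ℂ)^2)⁻¹) • (Z * (Y * B)) := by
    rw [← mul_assoc, hYZ, smul_mul_assoc, mul_assoc]
  have h5 : Z * B * Z = Z * (Z * B) - Z * X - Z * Y := by
    rw [mul_assoc, hBZ]; rw [mul_sub, mul_add]; abel
  have h6 : B * (Z * B) = Z * (B * B) - X * B - Y * B := by
    rw [← mul_assoc, hBZ, sub_mul, add_mul, mul_assoc]; abel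
  refine ⟨?_, ?_, ?_, ?_, ?_⟩
  · show star Ω = Ω
    simp only [Ω, star_sub, star_add, star_smul, star_mul, hsX, hsY, hsZ, hsB,
      neg_mul, star_neg, Complex.star_def, map_mul, map_sub, Complex.conj_I, Complex.conj_ofReal, map_inv₀]
    rw [hBZ]
    module
  · show Ω * X = X * Ω
    simp only [Ω, sub_mul, add_mul, mul_sub, mul_add, smul_mul_assoc, mul_smul_comm]
    rw [h1, h2, hYX, hXY]
    simp only [smul_sub, smul_add, smul_smul]
    match_scalars <;> field_simp <;> ring
  · show Ω * Y = Y * Ω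
    simp only [Ω, sub_mul, add_mul, mul_sub, mul_add, smul_mul_assoc, mul_smul_comm]
    rw [h3, h4, hXY, hYX]
    simp only [smul_sub, smul_add, smul_smul]
    match_scalars <;> field_simp <;> ring
  · show Ω * Z = Z * Ω
    simp only [Ω, sub_mul, add_mul, mul_sub, mul_add, smul_mul_assoc, mul_smul_comm]
    rw [h5, hXZ, hYZ]
    simp only [smul_sub, smul_add, smul_smul]
    match_scalars <;> field_simp <;> ring
  · show Ω * B = B * Ω
    simp only [Ω, sub_mul, add_mul, mul_sub, mul_add, smul_mul_assoc, mul_smul_comm]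
    rw [mul_assoc Z B B, h6, hBX, hBY]
    simp only [smul_sub, smul_add, smul_smul, mul_add, mul_one]
    match_scalars <;> field_simp <;> ring
end

section
/- In U_q(sl(2,ℝ)_t), the identity B_t(qY_t − q⁻¹X_t) = (q⁻¹Y_t − qX_t)B_t holds, and consequently qY_t − q⁻¹X_t commutes with Z_tB_t. -/
/-- In `U_q(sl(2,ℝ)_t)`, the identity `B(qY − q⁻¹X) = (q⁻¹Y − qX)B` holds, and
consequently `qY − q⁻¹X` commutes with `ZB`. -/
theorem stmt10 (q t : ℝ) (hq0 : 0 < q) (hq1 : q < 1)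
    (D : Type*) [Ring D] [Algebra ℂ D]
    (X Y Z B : D)
    (hXZ : X * Z = ((q : ℂ) ^ 2) • (Z * X))
    (hYZ : Y * Z = (((q : ℂ) ^ 2)⁻¹) • (Z * Y))
    (hXY : X * Y = 1 - ((q * t : ℝ) : ℂ) • Z - ((q : ℂ) ^ 2) • (Z * Z))
    (hYX : Y * X = 1 - ((q⁻¹ * t : ℝ) : ℂ) • Z - (((q : ℂ) ^ 2)⁻¹) • (Z * Z))
    (hBX : B * X = ((q : ℂ) ^ 2) • (X * B) +
      (q : ℂ) • (((q : ℂ) + (q : ℂ)⁻¹) • Z + (t : ℂ) • (1 : D)))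
    (hBY : B * Y = (((q : ℂ) ^ 2)⁻¹) • (Y * B) +
      (q : ℂ)⁻¹ • (((q : ℂ) + (q : ℂ)⁻¹) • Z + (t : ℂ) • (1 : D)))
    (hBZ : B * Z = Z * B - (X + Y)) :
    B * ((q : ℂ) • Y - (q : ℂ)⁻¹ • X) = ((q : ℂ)⁻¹ • Y - (q : ℂ) • X) * B ∧
      Commute ((q : ℂ) • Y - (q : ℂ)⁻¹ • X) (Z * B) := by
  have hq : (q : ℂ) ≠ 0 := by exact_mod_cast hq0.ne'
  have h1 : B * ((q : ℂ) • Y - (q : ℂ)⁻¹ • X) = ((q : ℂ)⁻¹ • Y - (q : ℂ) • X) * B := by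
    rw [mul_sub, sub_mul, mul_smul_comm, mul_smul_comm, smul_mul_assoc, smul_mul_assoc,
      hBX, hBY]
    match_scalars <;> field_simp <;> ring
  refine ⟨h1, ?_⟩
  have h2 : ((q : ℂ) • Y - (q : ℂ)⁻¹ • X) * Z = Z * ((q : ℂ)⁻¹ • Y - (q : ℂ) • X) := by
    rw [sub_mul, mul_sub, smul_mul_assoc, smul_mul_assoc, mul_smul_comm, mul_smul_comm,
      hXZ, hYZ]
    match_scalars <;> field_simp <;> ring
  show _ = _
  calc ((q : ℂ) • Y - (q : ℂ)⁻¹ • X) * (Z * B)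
      = (((q : ℂ) • Y - (q : ℂ)⁻¹ • X) * Z) * B := by rw [mul_assoc]
    _ = Z * (((q : ℂ)⁻¹ • Y - (q : ℂ) • X) * B) := by rw [h2, mul_assoc]
    _ = Z * (B * ((q : ℂ) • Y - (q : ℂ)⁻¹ • X)) := by rw [h1]
    _ = (Z * B) * ((q : ℂ) • Y - (q : ℂ)⁻¹ • X) := by rw [mul_assoc]
end

section
/- Define, in the Podleś sphere algebra O_q(S_t²) with t = [[a]] = qᵃ − q⁻ᵃ, the elements T_c⁺, A_c, T_c⁻ for c ∈ ℝ by (T_c⁺ + t, A_c, T_c⁻ + t)ᵀ = M (X_t, Z_t, Y_t)ᵀ where M is the matrix [[iq^{c}, −(q⁻¹+q), iq^{−c}],[iq⁻¹, q^{c}−q^{−c}, −iq],[−iq^{−c}, −(q⁻¹+q), −iq^{c}]]. Then T_{c+2}⁻ T_c⁺ = (q^{c−a+1}+q^{−c+a−1} − A_c)(q^{c+a+1}+q^{−c−a−1} + A_c). -/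
noncomputable section

/-- `T_c⁺` in `O_q(S_t²)`, defined by `T_c⁺ + t = iq^c X − (q⁻¹+q)Z + iq^{−c} Y`. -/
def Tplus (q a : ℝ) {D : Type*} [Ring D] [Algebra ℂ D] (X Y Z : D) (c : ℝ) : D :=
  (Complex.I * ((q ^ c : ℝ) : ℂ)) • X - (((q⁻¹ + q : ℝ)) : ℂ) • Z +
    (Complex.I * ((q ^ (-c) : ℝ) : ℂ)) • Y - (((q ^ a - q ^ (-a) : ℝ)) : ℂ) • (1 : D)

/-- `A_c = iq⁻¹ X + (q^c − q^{−c}) Z − iq Y` in `O_q(S_t²)`. -/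
def Ac (q : ℝ) {D : Type*} [Ring D] [Algebra ℂ D] (X Y Z : D) (c : ℝ) : D :=
  (Complex.I * ((q⁻¹ : ℝ) : ℂ)) • X + (((q ^ c - q ^ (-c) : ℝ)) : ℂ) • Z -
    (Complex.I * ((q : ℝ) : ℂ)) • Y

/-- `T_c⁻` in `O_q(S_t²)`, defined by `T_c⁻ + t = −iq^{−c} X − (q⁻¹+q)Z − iq^{c} Y`. -/
def Tminus (q a : ℝ) {D : Type*} [Ring D] [Algebra ℂ D] (X Y Z : D) (c : ℝ) : D :=
  -((Complex.I * ((q ^ (-c) : ℝ) : ℂ)) • X) - (((q⁻¹ + q : ℝ)) : ℂ) • Z -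
    (Complex.I * ((q ^ c : ℝ) : ℂ)) • Y - (((q ^ a - q ^ (-a) : ℝ)) : ℂ) • (1 : D)

lemma mul_exp_exp_aux (x a b : ℂ) :
    x * Complex.exp a * Complex.exp b = x * Complex.exp (a + b) := by
  rw [mul_assoc, ← Complex.exp_add]

lemma exp_mul_exp_aux (x a b : ℂ) :
    Complex.exp a * x * Complex.exp b = x * Complex.exp (a + b) := by
  rw [mul_comm (Complex.exp a) x, mul_assoc, ← Complex.exp_add]

set_option maxHeartbeats 3200000 in
/-- In the Podleś sphere algebra `O_q(S_t²)` with `t = qᵃ − q⁻ᵃ`,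
`T_{c+2}⁻ T_c⁺ = (q^{c−a+1}+q^{−c+a−1} − A_c)(q^{c+a+1}+q^{−c−a−1} + A_c)`. -/
theorem stmt11 (q a : ℝ) (hq0 : 0 < q) (hq1 : q < 1) (c : ℝ)
    (D : Type*) [Ring D] [Algebra ℂ D] [StarRing D] [StarModule ℂ D]
    (X Y Z : D) (hsX : star X = Y) (hsZ : star Z = Z)
    (hXZ : X * Z = ((q : ℂ) ^ 2) • (Z * X))
    (hYZ : Y * Z = (((q : ℂ) ^ 2)⁻¹) • (Z * Y))
    (hXY : X * Y = 1 - ((q * (q ^ a - q ^ (-a)) : ℝ) : ℂ) • Z - ((q : ℂ) ^ 2) • (Z * Z))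
    (hYX : Y * X = 1 - ((q⁻¹ * (q ^ a - q ^ (-a)) : ℝ) : ℂ) • Z -
      (((q : ℂ) ^ 2)⁻¹) • (Z * Z)) :
    Tminus q a X Y Z (c + 2) * Tplus q a X Y Z c =
      (((q ^ (c - a + 1) + q ^ (-(c - a + 1)) : ℝ) : ℂ) • (1 : D) - Ac q X Y Z c) *
        (((q ^ (c + a + 1) + q ^ (-(c + a + 1)) : ℝ) : ℂ) • (1 : D) + Ac q X Y Z c) := by
  have hrw : ∀ x : ℝ, ((q ^ x : ℝ) : ℂ) = Complex.exp ((Real.log q : ℂ) * (x : ℂ)) := by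
    intro x
    rw [Real.rpow_def_of_pos hq0, Complex.ofReal_exp, Complex.ofReal_mul]
  have hq : (q : ℂ) = Complex.exp ((Real.log q : ℂ)) := by
    rw [← Complex.ofReal_exp, Real.exp_log hq0]
  rw [Tminus, Tplus, Ac]
  simp only [sub_mul, mul_sub, add_mul, mul_add, neg_mul, mul_neg, smul_mul_assoc,
    mul_smul_comm, smul_smul, one_mul, mul_one, smul_sub, smul_add, smul_neg, neg_smul,
    neg_neg]
  rw [hXZ, hYZ, hXY, hYX]
  simp only [smul_sub, smul_add, smul_smul, smul_neg]
  match_scalars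
  all_goals try push_cast [mul_inv_rev]
  all_goals try simp only [hrw, hq]
  all_goals try simp only [← Complex.exp_neg, ← Complex.exp_nat_mul, ← Complex.exp_add,
    mul_exp_exp_aux, exp_mul_exp_aux]
  all_goals push_cast
  all_goals try ring_nf
  all_goals try simp only [Complex.I_sq]
  all_goals try ring_nf
  all_goals try simp only [← Complex.exp_neg, ← Complex.exp_nat_mul, ← Complex.exp_add,
    mul_exp_exp_aux, exp_mul_exp_aux]
  all_goals try ring_nf
  all_goals try simp only [Complex.I_sq, ← Complex.exp_neg, ← Complex.exp_nat_mul,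
    ← Complex.exp_add, mul_exp_exp_aux, exp_mul_exp_aux]
  all_goals try ring_nf
end
end

section
/- With the elements T_c⁺, A_c, T_c⁻ of O_q(S_t²) as defined above (t = qᵃ − q⁻ᵃ), the relations A_{c+2}T_c⁺ = T_c⁺A_c, A_{c−2}T_c⁻ = T_c⁻A_c, and T_{c−2}⁺T_c⁻ = (q^{c−a−1}+q^{−c+a+1} − A_c)(q^{c+a−1}+q^{−c−a+1} + A_c) hold. -/
noncomputable section

set_option maxHeartbeats 4000000 in
/-- In `O_q(S_t²)` with `t = qᵃ − q⁻ᵃ`: `A_{c+2}T_c⁺ = T_c⁺A_c`, `A_{c−2}T_c⁻ = T_c⁻A_c`,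
and `T_{c−2}⁺T_c⁻ = (q^{c−a−1}+q^{−c+a+1} − A_c)(q^{c+a−1}+q^{−c−a+1} + A_c)`. -/
theorem stmt12 (q a : ℝ) (hq0 : 0 < q) (hq1 : q < 1) (c : ℝ)
    (D : Type*) [Ring D] [Algebra ℂ D] [StarRing D] [StarModule ℂ D]
    (X Y Z : D) (hsX : star X = Y) (hsZ : star Z = Z)
    (hXZ : X * Z = ((q : ℂ) ^ 2) • (Z * X))
    (hYZ : Y * Z = (((q : ℂ) ^ 2)⁻¹) • (Z * Y))
    (hXY : X * Y = 1 - ((q * (q ^ a - q ^ (-a)) : ℝ) : ℂ) • Z - ((q : ℂ) ^ 2) • (Z * Z))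
    (hYX : Y * X = 1 - ((q⁻¹ * (q ^ a - q ^ (-a)) : ℝ) : ℂ) • Z -
      (((q : ℂ) ^ 2)⁻¹) • (Z * Z)) :
    Ac q X Y Z (c + 2) * Tplus q a X Y Z c = Tplus q a X Y Z c * Ac q X Y Z c ∧
      Ac q X Y Z (c - 2) * Tminus q a X Y Z c = Tminus q a X Y Z c * Ac q X Y Z c ∧
      Tplus q a X Y Z (c - 2) * Tminus q a X Y Z c =
        (((q ^ (c - a - 1) + q ^ (-(c - a - 1)) : ℝ) : ℂ) • (1 : D) - Ac q X Y Z c) *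
          (((q ^ (c + a - 1) + q ^ (-(c + a - 1)) : ℝ) : ℂ) • (1 : D) + Ac q X Y Z c) := by
  have hqne : q ≠ 0 := hq0.ne'
  have e1 : q ^ (c + 2) = q ^ c * (q * q) := by
    rw [show c + 2 = c + 1 + 1 by ring, Real.rpow_add hq0, Real.rpow_add hq0, Real.rpow_one]
    ring
  have e2 : q ^ (-(c + 2)) = (q ^ c)⁻¹ * (q⁻¹ * q⁻¹) := by
    rw [show -(c + 2) = -c + -1 + -1 by ring, Real.rpow_add hq0, Real.rpow_add hq0,
      Real.rpow_neg_one, Real.rpow_neg hq0.le]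
    ring
  have e3 : q ^ (c - 2) = q ^ c * (q⁻¹ * q⁻¹) := by
    rw [show c - 2 = c + -1 + -1 by ring, Real.rpow_add hq0, Real.rpow_add hq0,
      Real.rpow_neg_one]
    ring
  have e4 : q ^ (-(c - 2)) = (q ^ c)⁻¹ * (q * q) := by
    rw [show -(c - 2) = -c + 1 + 1 by ring, Real.rpow_add hq0, Real.rpow_add hq0,
      Real.rpow_one, Real.rpow_neg hq0.le]
    ring
  have e5 : q ^ (c - a - 1) = q ^ c * (q ^ a)⁻¹ * q⁻¹ := by
    rw [show c - a - 1 = c + -a + -1 by ring, Real.rpow_add hq0, Real.rpow_add hq0,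
      Real.rpow_neg_one, Real.rpow_neg hq0.le]
  have e6 : q ^ (-(c - a - 1)) = (q ^ c)⁻¹ * q ^ a * q := by
    rw [show -(c - a - 1) = -c + a + 1 by ring, Real.rpow_add hq0, Real.rpow_add hq0,
      Real.rpow_one, Real.rpow_neg hq0.le]
  have e7 : q ^ (c + a - 1) = q ^ c * q ^ a * q⁻¹ := by
    rw [show c + a - 1 = c + a + -1 by ring, Real.rpow_add hq0, Real.rpow_add hq0,
      Real.rpow_neg_one]
  have e8 : q ^ (-(c + a - 1)) = (q ^ c)⁻¹ * (q ^ a)⁻¹ * q := by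
    rw [show -(c + a - 1) = -c + -a + 1 by ring, Real.rpow_add hq0, Real.rpow_add hq0,
      Real.rpow_one, Real.rpow_neg hq0.le, Real.rpow_neg hq0.le]
  have ena : q ^ (-a) = (q ^ a)⁻¹ := Real.rpow_neg hq0.le a
  have enc : q ^ (-c) = (q ^ c)⁻¹ := Real.rpow_neg hq0.le c
  have hqC : (q : ℂ) ≠ 0 := by exact_mod_cast hqne
  have huC : ((q ^ c : ℝ) : ℂ) ≠ 0 := by
    exact_mod_cast (Real.rpow_pos_of_pos hq0 c).ne'
  have hvC : ((q ^ a : ℝ) : ℂ) ≠ 0 := by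
    exact_mod_cast (Real.rpow_pos_of_pos hq0 a).ne'
  refine ⟨?_, ?_, ?_⟩
  all_goals
    simp only [Tplus, Ac, Tminus, e1, e2, e3, e4, e5, e6, e7, e8, ena, enc, sub_mul, mul_sub,
      add_mul, mul_add, neg_mul, mul_neg, smul_mul_assoc, mul_smul_comm, smul_smul, hXZ, hYZ,
      hXY, hYX, one_mul, mul_one, smul_sub, smul_add]
  all_goals match_scalars
  all_goals push_cast
  all_goals set p : ℂ := ((q : ℝ) : ℂ) with hp
  all_goals set u : ℂ := ((q ^ c : ℝ) : ℂ) with hu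
  all_goals set v : ℂ := ((q ^ a : ℝ) : ℂ) with hv
  all_goals field_simp [hqC, huC, hvC]
  all_goals try rw [div_eq_div_iff (by simp [hqC, huC, hvC]) (by simp [hqC, huC, hvC])]
  all_goals try rw [div_eq_iff (by simp [hqC, huC, hvC])]
  all_goals try rw [eq_div_iff (by simp [hqC, huC, hvC])]
  all_goals try ring_nf
  all_goals try simp only [Complex.I_sq]
  all_goals try ring
  all_goals have hP : p * p⁻¹ = 1 := mul_inv_cancel₀ hqC
  all_goals have hU : u * u⁻¹ = 1 := mul_inv_cancel₀ huC
  all_goals have hV : v * v⁻¹ = 1 := mul_inv_cancel₀ hvC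
end
end

section
/- Let V be a U_q(sl(2,ℝ)_t)-module and let V_c be the eigenspace of iB_t at eigenvalue [c] = (q⁻ᶜ−qᶜ)/(q⁻¹−q). Then A_c V_c ⊆ V_c, T_c⁺ V_c ⊆ V_{c+2}, and T_c⁻ V_c ⊆ V_{c−2}. -/
noncomputable section

/-- Let `V` be a `U_q(sl(2,ℝ)_t)`-module (given by operators `X, Y, Z, B` satisfying the
defining relations, `t = qᵃ − q⁻ᵃ`) and let `V_c` be the eigenspace of `iB` at eigenvalue
`[c] = (q⁻ᶜ−qᶜ)/(q⁻¹−q)`. Then `A_c V_c ⊆ V_c`, `T_c⁺ V_c ⊆ V_{c+2}` and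
`T_c⁻ V_c ⊆ V_{c−2}`. -/
theorem stmt13 (q a : ℝ) (hq0 : 0 < q) (hq1 : q < 1)
    (V : Type*) [AddCommGroup V] [Module ℂ V]
    (X Y Z B : Module.End ℂ V)
    (hXZ : X * Z = ((q : ℂ) ^ 2) • (Z * X))
    (hYZ : Y * Z = (((q : ℂ) ^ 2)⁻¹) • (Z * Y))
    (hXY : X * Y = 1 - ((q * (q ^ a - q ^ (-a)) : ℝ) : ℂ) • Z - ((q : ℂ) ^ 2) • (Z * Z))
    (hYX : Y * X = 1 - ((q⁻¹ * (q ^ a - q ^ (-a)) : ℝ) : ℂ) • Z -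
      (((q : ℂ) ^ 2)⁻¹) • (Z * Z))
    (hBX : B * X = ((q : ℂ) ^ 2) • (X * B) +
      (q : ℂ) • (((q : ℂ) + (q : ℂ)⁻¹) • Z + ((q ^ a - q ^ (-a) : ℝ) : ℂ) • 1))
    (hBY : B * Y = (((q : ℂ) ^ 2)⁻¹) • (Y * B) +
      (q : ℂ)⁻¹ • (((q : ℂ) + (q : ℂ)⁻¹) • Z + ((q ^ a - q ^ (-a) : ℝ) : ℂ) • 1))
    (hBZ : B * Z = Z * B - (X + Y))
    (c : ℝ) (v : V)
    (hv : v ∈ Module.End.eigenspace (Complex.I • B)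
      ((((q ^ (-c) - q ^ c) / (q⁻¹ - q) : ℝ)) : ℂ)) :
    Ac q X Y Z c v ∈ Module.End.eigenspace (Complex.I • B)
        ((((q ^ (-c) - q ^ c) / (q⁻¹ - q) : ℝ)) : ℂ) ∧
      Tplus q a X Y Z c v ∈ Module.End.eigenspace (Complex.I • B)
        ((((q ^ (-(c + 2)) - q ^ (c + 2)) / (q⁻¹ - q) : ℝ)) : ℂ) ∧
      Tminus q a X Y Z c v ∈ Module.End.eigenspace (Complex.I • B)
        ((((q ^ (-(c - 2)) - q ^ (c - 2)) / (q⁻¹ - q) : ℝ)) : ℂ) := by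
  rw [Module.End.mem_eigenspace_iff] at hv
  rw [LinearMap.smul_apply] at hv
  set μ : ℂ := ((((q ^ (-c) - q ^ c) / (q⁻¹ - q) : ℝ)) : ℂ) with hμdef
  set μp : ℂ := ((((q ^ (-(c + 2)) - q ^ (c + 2)) / (q⁻¹ - q) : ℝ)) : ℂ) with hμpdef
  set μm : ℂ := ((((q ^ (-(c - 2)) - q ^ (c - 2)) / (q⁻¹ - q) : ℝ)) : ℂ) with hμmdef
  have hBv : B v = (-Complex.I * μ) • v := by
    have := congrArg (fun w => (-Complex.I) • w) hv
    simpa [smul_smul, Complex.I_mul_I] using this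
  have hBXv : B (X v) = ((q:ℂ)^2 * (-Complex.I * μ)) • X v
      + ((q:ℂ) * ((q:ℂ) + (q:ℂ)⁻¹)) • Z v + ((q:ℂ) * ((q ^ a - q ^ (-a) : ℝ) : ℂ)) • v := by
    rw [← Module.End.mul_apply, hBX]
    simp only [LinearMap.add_apply, LinearMap.smul_apply, Module.End.mul_apply,
      Module.End.one_apply, hBv, map_smul]
    module
  have hBYv : B (Y v) = (((q:ℂ)^2)⁻¹ * (-Complex.I * μ)) • Y v
      + ((q:ℂ)⁻¹ * ((q:ℂ) + (q:ℂ)⁻¹)) • Z v + ((q:ℂ)⁻¹ * ((q ^ a - q ^ (-a) : ℝ) : ℂ)) • v := by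
    rw [← Module.End.mul_apply, hBY]
    simp only [LinearMap.add_apply, LinearMap.smul_apply, Module.End.mul_apply,
      Module.End.one_apply, hBv, map_smul]
    module
  have hBZv : B (Z v) = (-Complex.I * μ) • Z v - X v - Y v := by
    rw [← Module.End.mul_apply, hBZ]
    simp only [LinearMap.sub_apply, LinearMap.add_apply, Module.End.mul_apply, hBv, map_smul]
    module
  have hq' : (q:ℂ) ≠ 0 := by exact_mod_cast hq0.ne'
  have hkR : (0:ℝ) < q⁻¹ - q := by
    have h1 : q * q⁻¹ = 1 := mul_inv_cancel₀ hq0.ne'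
    nlinarith [mul_pos hq0 hq0]
  have hI : Complex.I * Complex.I = -1 := Complex.I_mul_I
  have hqq : (q:ℂ) * (q:ℂ)⁻¹ = 1 := mul_inv_cancel₀ hq'
  have hrs : ((q ^ c : ℝ) : ℂ) * ((q ^ (-c) : ℝ) : ℂ) = 1 := by
    rw [← Complex.ofReal_mul, ← Real.rpow_add hq0]
    norm_num
  have h1q : (1:ℝ) - q ^ 2 ≠ 0 := by nlinarith
  set w : ℂ := (((q⁻¹ - q)⁻¹ : ℝ) : ℂ) with hwdef
  have hw : w * (q:ℂ)⁻¹ = w * (q:ℂ) + 1 := by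
    have h1 : (q⁻¹ - q)⁻¹ * (q⁻¹ - q) = 1 := inv_mul_cancel₀ hkR.ne'
    have hwR : (q⁻¹ - q)⁻¹ * q⁻¹ = (q⁻¹ - q)⁻¹ * q + 1 := by
      linear_combination h1
    rw [hwdef]
    exact_mod_cast congrArg (Complex.ofReal) hwR
  have hw2 : w * (q:ℂ)^2 = w - (q:ℂ) := by
    have h1 : (q⁻¹ - q)⁻¹ * (q⁻¹ - q) = 1 := inv_mul_cancel₀ hkR.ne'
    have h2 : q * q⁻¹ = 1 := mul_inv_cancel₀ hq0.ne'
    have hwR : (q⁻¹ - q)⁻¹ * q^2 = (q⁻¹ - q)⁻¹ - q := by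
      linear_combination (-q) * h1 + (q⁻¹ - q)⁻¹ * h2
    rw [hwdef]
    exact_mod_cast congrArg (Complex.ofReal) hwR
  have e1 : q ^ (c + 2) = q ^ c * q * q := by
    rw [show c + 2 = c + 1 + 1 by ring, Real.rpow_add hq0, Real.rpow_add hq0, Real.rpow_one]
  have e2 : q ^ (-(c + 2)) = q ^ (-c) * q⁻¹ * q⁻¹ := by
    rw [show -(c + 2) = -c + -1 + -1 by ring, Real.rpow_add hq0, Real.rpow_add hq0,
      Real.rpow_neg_one]
  have e3 : q ^ (c - 2) = q ^ c * q⁻¹ * q⁻¹ := by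
    rw [show c - 2 = c + -1 + -1 by ring, Real.rpow_add hq0, Real.rpow_add hq0,
      Real.rpow_neg_one]
  have e4 : q ^ (-(c - 2)) = q ^ (-c) * q * q := by
    rw [show -(c - 2) = -c + 1 + 1 by ring, Real.rpow_add hq0, Real.rpow_add hq0, Real.rpow_one]
  have hmu : μ = (((q ^ (-c) : ℝ) : ℂ) - ((q ^ c : ℝ) : ℂ)) * w := by
    rw [hμdef, hwdef]; push_cast; ring
  have hmup : μp = (((q ^ (-c) : ℝ) : ℂ) * (q:ℂ)⁻¹ * (q:ℂ)⁻¹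
      - ((q ^ c : ℝ) : ℂ) * (q:ℂ) * (q:ℂ)) * w := by
    rw [hμpdef, hwdef, show ((q ^ (-(c + 2)) - q ^ (c + 2)) / (q⁻¹ - q) : ℝ)
      = (q ^ (-c) * q⁻¹ * q⁻¹ - q ^ c * q * q) * (q⁻¹ - q)⁻¹ by
        rw [← e1, ← e2, div_eq_mul_inv]]
    push_cast; ring
  have hmum : μm = (((q ^ (-c) : ℝ) : ℂ) * (q:ℂ) * (q:ℂ)
      - ((q ^ c : ℝ) : ℂ) * (q:ℂ)⁻¹ * (q:ℂ)⁻¹) * w := by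
    rw [hμmdef, hwdef, show ((q ^ (-(c - 2)) - q ^ (c - 2)) / (q⁻¹ - q) : ℝ)
      = (q ^ (-c) * q * q - q ^ c * q⁻¹ * q⁻¹) * (q⁻¹ - q)⁻¹ by
        rw [← e3, ← e4, div_eq_mul_inv]]
    push_cast; ring
  refine ⟨?_, ?_, ?_⟩
  · rw [Module.End.mem_eigenspace_iff, LinearMap.smul_apply]
    simp only [Ac, LinearMap.sub_apply, LinearMap.add_apply, LinearMap.neg_apply,
      LinearMap.smul_apply, Module.End.one_apply]
    simp only [map_add, map_sub, map_smul, map_neg, hBXv, hBYv, hBZv, hBv]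
    push_cast
    match_scalars
    · linear_combination ((-1)*Complex.I*(q:ℂ)⁻¹ + (-1)*Complex.I^3*(q:ℂ)^2*(q:ℂ)⁻¹) * hmu + (Complex.I*(q:ℂ)^2*(q:ℂ)⁻¹*((q ^ c : ℝ) : ℂ)*w + (-1)*Complex.I*(q:ℂ)^2*(q:ℂ)⁻¹*((q ^ (-c) : ℝ) : ℂ)*w) * hI + ((-1)*Complex.I*(q:ℂ)*((q ^ c : ℝ) : ℂ)*w + Complex.I*(q:ℂ)*((q ^ (-c) : ℝ) : ℂ)*w) * hqq + (Complex.I*((q ^ c : ℝ) : ℂ) + (-1)*Complex.I*((q ^ (-c) : ℝ) : ℂ)) * hw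
    · linear_combination ((-1)*Complex.I^2*((q ^ c : ℝ) : ℂ) + Complex.I^2*((q ^ (-c) : ℝ) : ℂ) + (-1)*((q ^ c : ℝ) : ℂ) + ((q ^ (-c) : ℝ) : ℂ)) * hmu + ((-2)*((q ^ c : ℝ) : ℂ)*((q ^ (-c) : ℝ) : ℂ)*w + ((q ^ c : ℝ) : ℂ)^2*w + ((q ^ (-c) : ℝ) : ℂ)^2*w) * hI
    · linear_combination 0*hI
    · linear_combination (Complex.I*(q:ℂ) + Complex.I^3*(q:ℂ)*(q:ℂ)⁻¹^2) * hmu + ((-1)*Complex.I*(q:ℂ)*(q:ℂ)⁻¹^2*((q ^ c : ℝ) : ℂ)*w + Complex.I*(q:ℂ)*(q:ℂ)⁻¹^2*((q ^ (-c) : ℝ) : ℂ)*w) * hI + (Complex.I*(q:ℂ)⁻¹*((q ^ c : ℝ) : ℂ)*w + (-1)*Complex.I*(q:ℂ)⁻¹*((q ^ (-c) : ℝ) : ℂ)*w) * hqq + (Complex.I*((q ^ c : ℝ) : ℂ) + (-1)*Complex.I*((q ^ (-c) : ℝ) : ℂ)) * hw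

  · rw [Module.End.mem_eigenspace_iff, LinearMap.smul_apply]
    simp only [Tplus, LinearMap.sub_apply, LinearMap.add_apply, LinearMap.neg_apply,
      LinearMap.smul_apply, Module.End.one_apply]
    simp only [map_add, map_sub, map_smul, map_neg, hBXv, hBYv, hBZv, hBv]
    push_cast
    match_scalars
    · linear_combination ((-1)*Complex.I^3*(q:ℂ)^2*((q ^ c : ℝ) : ℂ)) * hmu + ((-1)*Complex.I*((q ^ c : ℝ) : ℂ)) * hmup + ((-1)*Complex.I*(q:ℂ)^2*((q ^ c : ℝ) : ℂ)*((q ^ (-c) : ℝ) : ℂ)*w + Complex.I*(q:ℂ)^2*((q ^ c : ℝ) : ℂ)^2*w) * hI + ((-1)*Complex.I*w) * hqq + (Complex.I*(q:ℂ)^2*w + (-1)*Complex.I*(q:ℂ)⁻¹^2*w) * hrs + ((-1)*Complex.I*(q:ℂ)⁻¹) * hw + (Complex.I) * hw2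
    · linear_combination (Complex.I^2*(q:ℂ) + Complex.I^2*(q:ℂ)⁻¹) * hmu + ((q:ℂ) + (q:ℂ)⁻¹) * hmup + ((q:ℂ)*(q:ℂ)⁻¹*((q ^ c : ℝ) : ℂ) + (q:ℂ)*(q:ℂ)⁻¹*((q ^ (-c) : ℝ) : ℂ) + (-1)*(q:ℂ)*((q ^ c : ℝ) : ℂ)*w + (q:ℂ)*((q ^ (-c) : ℝ) : ℂ)*w + (q:ℂ)^2*((q ^ c : ℝ) : ℂ) + (-1)*(q:ℂ)⁻¹*((q ^ c : ℝ) : ℂ)*w + (q:ℂ)⁻¹*((q ^ (-c) : ℝ) : ℂ)*w + (q:ℂ)⁻¹^2*((q ^ (-c) : ℝ) : ℂ)) * hI + ((-1)*(q:ℂ)*((q ^ c : ℝ) : ℂ)*w + (2)*(q:ℂ)⁻¹*((q ^ (-c) : ℝ) : ℂ)*w + (-1)*((q ^ c : ℝ) : ℂ) + (-1)*((q ^ (-c) : ℝ) : ℂ)) * hqq + ((q:ℂ)⁻¹^2*((q ^ (-c) : ℝ) : ℂ) + ((q ^ c : ℝ) : ℂ) + ((q ^ (-c) : ℝ) : ℂ))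 * hw + ((-1)*(q:ℂ)*((q ^ c : ℝ) : ℂ)) * hw2
    · linear_combination (Complex.I^2*(((q ^ a : ℝ) : ℂ) - ((q ^ (-a) : ℝ) : ℂ))) * hmu + ((((q ^ a : ℝ) : ℂ) - ((q ^ (-a) : ℝ) : ℂ))) * hmup + ((q:ℂ)*((q ^ c : ℝ) : ℂ)*(((q ^ a : ℝ) : ℂ) - ((q ^ (-a) : ℝ) : ℂ)) + (q:ℂ)⁻¹*((q ^ (-c) : ℝ) : ℂ)*(((q ^ a : ℝ) : ℂ) - ((q ^ (-a) : ℝ) : ℂ)) + (-1)*((q ^ c : ℝ) : ℂ)*(((q ^ a : ℝ) : ℂ) - ((q ^ (-a) : ℝ) : ℂ))*w + ((q ^ (-c) : ℝ) : ℂ)*(((q ^ a : ℝ) : ℂ) - ((q ^ (-a) : ℝ) : ℂ))*w) * hI + (((q ^ (-c) : ℝ) : ℂ)*(((q ^ a : ℝ) : ℂ) - ((q ^ (-a) : ℝ) : ℂ))*w) * hqq + ((q:ℂ)⁻¹*((q ^ (-c) : ℝ) : ℂ)*(((q ^ a : ℝ) : ℂ) - ((q ^ (-a) : ℝ) : ℂ)))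 * hw + ((-1)*((q ^ c : ℝ) : ℂ)*(((q ^ a : ℝ) : ℂ) - ((q ^ (-a) : ℝ) : ℂ))) * hw2
    · linear_combination ((-1)*Complex.I^3*(q:ℂ)⁻¹^2*((q ^ (-c) : ℝ) : ℂ)) * hmu + ((-1)*Complex.I*((q ^ (-c) : ℝ) : ℂ)) * hmup + (Complex.I*(q:ℂ)⁻¹^2*((q ^ c : ℝ) : ℂ)*((q ^ (-c) : ℝ) : ℂ)*w + (-1)*Complex.I*(q:ℂ)⁻¹^2*((q ^ (-c) : ℝ) : ℂ)^2*w) * hI + ((-1)*Complex.I*w) * hqq + (Complex.I*(q:ℂ)^2*w + (-1)*Complex.I*(q:ℂ)⁻¹^2*w) * hrs + ((-1)*Complex.I*(q:ℂ)⁻¹) * hw + (Complex.I) * hw2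

  · rw [Module.End.mem_eigenspace_iff, LinearMap.smul_apply]
    simp only [Tminus, LinearMap.sub_apply, LinearMap.add_apply, LinearMap.neg_apply,
      LinearMap.smul_apply, Module.End.one_apply]
    simp only [map_add, map_sub, map_smul, map_neg, hBXv, hBYv, hBZv, hBv]
    push_cast
    match_scalars
    · linear_combination (Complex.I^3*(q:ℂ)^2*((q ^ (-c) : ℝ) : ℂ)) * hmu + (Complex.I*((q ^ (-c) : ℝ) : ℂ)) * hmum + ((-1)*Complex.I*(q:ℂ)^2*((q ^ c : ℝ) : ℂ)*((q ^ (-c) : ℝ) : ℂ)*w + Complex.I*(q:ℂ)^2*((q ^ (-c) : ℝ) : ℂ)^2*w) * hI + ((-1)*Complex.I*w) * hqq + (Complex.I*(q:ℂ)^2*w + (-1)*Complex.I*(q:ℂ)⁻¹^2*w) * hrs + ((-1)*Complex.I*(q:ℂ)⁻¹) * hw + (Complex.I) * hw2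
    · linear_combination (Complex.I^2*(q:ℂ) + Complex.I^2*(q:ℂ)⁻¹) * hmu + ((q:ℂ) + (q:ℂ)⁻¹) * hmum + ((-1)*(q:ℂ)*(q:ℂ)⁻¹*((q ^ c : ℝ) : ℂ) + (-1)*(q:ℂ)*(q:ℂ)⁻¹*((q ^ (-c) : ℝ) : ℂ) + (-1)*(q:ℂ)*((q ^ c : ℝ) : ℂ)*w + (q:ℂ)*((q ^ (-c) : ℝ) : ℂ)*w + (-1)*(q:ℂ)^2*((q ^ (-c) : ℝ) : ℂ) + (-1)*(q:ℂ)⁻¹*((q ^ c : ℝ) : ℂ)*w + (q:ℂ)⁻¹*((q ^ (-c) : ℝ) : ℂ)*w + (-1)*(q:ℂ)⁻¹^2*((q ^ c : ℝ) : ℂ)) * hI + ((q:ℂ)*((q ^ (-c) : ℝ) : ℂ)*w + (-2)*(q:ℂ)⁻¹*((q ^ c : ℝ) : ℂ)*w + ((q ^ c : ℝ) : ℂ) + ((q ^ (-c) : ℝ) : ℂ)) * hqq + ((-1)*(q:ℂ)⁻¹^2*((q ^ c : ℝ) : ℂ) + (-1)*((q ^ c : ℝ) : ℂ) + (-1)*((q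 ^ (-c) : ℝ) : ℂ)) * hw + ((q:ℂ)*((q ^ (-c) : ℝ) : ℂ)) * hw2
    · linear_combination (Complex.I^2*(((q ^ a : ℝ) : ℂ) - ((q ^ (-a) : ℝ) : ℂ))) * hmu + ((((q ^ a : ℝ) : ℂ) - ((q ^ (-a) : ℝ) : ℂ))) * hmum + ((-1)*(q:ℂ)*((q ^ (-c) : ℝ) : ℂ)*(((q ^ a : ℝ) : ℂ) - ((q ^ (-a) : ℝ) : ℂ)) + (-1)*(q:ℂ)⁻¹*((q ^ c : ℝ) : ℂ)*(((q ^ a : ℝ) : ℂ) - ((q ^ (-a) : ℝ) : ℂ)) + (-1)*((q ^ c : ℝ) : ℂ)*(((q ^ a : ℝ) : ℂ) - ((q ^ (-a) : ℝ) : ℂ))*w + ((q ^ (-c) : ℝ) : ℂ)*(((q ^ a : ℝ) : ℂ) - ((q ^ (-a) : ℝ) : ℂ))*w) * hI + ((-1)*((q ^ c : ℝ) : ℂ)*(((q ^ a : ℝ) : ℂ) - ((q ^ (-a) : ℝ) : ℂ))*w) * hqq + ((-1)*(q:ℂ)⁻¹*((q ^ c : ℝ) : ℂ)*(((q ^ a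 : ℝ) : ℂ) - ((q ^ (-a) : ℝ) : ℂ))) * hw + (((q ^ (-c) : ℝ) : ℂ)*(((q ^ a : ℝ) : ℂ) - ((q ^ (-a) : ℝ) : ℂ))) * hw2
    · linear_combination (Complex.I^3*(q:ℂ)⁻¹^2*((q ^ c : ℝ) : ℂ)) * hmu + (Complex.I*((q ^ c : ℝ) : ℂ)) * hmum + (Complex.I*(q:ℂ)⁻¹^2*((q ^ c : ℝ) : ℂ)*((q ^ (-c) : ℝ) : ℂ)*w + (-1)*Complex.I*(q:ℂ)⁻¹^2*((q ^ c : ℝ) : ℂ)^2*w) * hI + ((-1)*Complex.I*w) * hqq + (Complex.I*(q:ℂ)^2*w + (-1)*Complex.I*(q:ℂ)⁻¹^2*w) * hrs + ((-1)*Complex.I*(q:ℂ)⁻¹) * hw + (Complex.I) * hw2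
end
end

section
/- The 3×3 Hermitian matrix π₁(iB_{[[a]]}) = [[q²[a], iq^{1/2}√(q+q⁻¹), 0],[−iq^{1/2}√(q+q⁻¹), [a], iq^{−1/2}√(q+q⁻¹)],[0, −iq^{−1/2}√(q+q⁻¹), q⁻²[a]]] has eigenvalues [a+2], [a], [a−2], with respective eigenvectors (q^{a+1/2}, −i√(q+q⁻¹), −q^{−a−1/2}), (q^{−1/2}, i(q+q⁻¹)^{−1/2}[[a]], q^{1/2}), and (−q^{−a+1/2}, −i√(q+q⁻¹), q^{a−1/2}). -/
noncomputable section

lemma spec3 (A0 A1 A2 B1 B2 l1 l2 l3 : ℂ)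
    (hdet : ∀ z : ℂ, (z - A0) * (z - A1) * (z - A2) + B2 * B2 * (z - A0)
      + B1 * B1 * (z - A2) = (z - l1) * (z - l2) * (z - l3)) :
    spectrum ℂ !![A0, B1, 0; -B1, A1, B2; 0, -B2, A2] = {l1, l2, l3} := by
  ext z
  rw [spectrum.mem_iff, Matrix.isUnit_iff_isUnit_det, isUnit_iff_ne_zero, not_not]
  have h1 : (algebraMap ℂ (Matrix (Fin 3) (Fin 3) ℂ)) z
      - !![A0, B1, 0; -B1, A1, B2; 0, -B2, A2]
      = !![z - A0, -B1, 0; B1, z - A1, -B2; 0, B2, z - A2] := by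
    ext i j
    fin_cases i <;> fin_cases j <;>
      simp [Matrix.algebraMap_matrix_apply]
  rw [h1]
  have h2 : (!![z - A0, -B1, 0; B1, z - A1, -B2; 0, B2, z - A2] : Matrix (Fin 3) (Fin 3) ℂ).det
      = (z - l1) * (z - l2) * (z - l3) := by
    simp [Matrix.det_fin_three]
    linear_combination hdet z
  rw [h2]
  simp only [Set.mem_insert_iff, Set.mem_singleton_iff, mul_eq_zero, sub_eq_zero, or_assoc]

/-- The 3×3 Hermitian matrix `π₁(iB_{[[a]]})` has eigenvalues `[a+2]`, `[a]`, `[a−2]`,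
with the indicated eigenvectors. -/
theorem stmt19 (q a : ℝ) (hq0 : 0 < q) (hq1 : q < 1) :
    let br : ℝ → ℂ := fun c => (((q ^ (-c) - q ^ c) / (q⁻¹ - q) : ℝ) : ℂ)
    let s : ℂ := ((Real.sqrt (q + q⁻¹) : ℝ) : ℂ)
    let M : Matrix (Fin 3) (Fin 3) ℂ :=
      !![((q ^ (2 : ℝ) : ℝ) : ℂ) * br a, Complex.I * ((q ^ ((1 : ℝ)/2) : ℝ) : ℂ) * s, 0;
         -(Complex.I * ((q ^ ((1 : ℝ)/2) : ℝ) : ℂ) * s), br a,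
           Complex.I * ((q ^ (-(1 : ℝ)/2) : ℝ) : ℂ) * s;
         0, -(Complex.I * ((q ^ (-(1 : ℝ)/2) : ℝ) : ℂ) * s), ((q ^ (-(2 : ℝ)) : ℝ) : ℂ) * br a]
    let vplus : Fin 3 → ℂ :=
      ![((q ^ (a + 1/2) : ℝ) : ℂ), -(Complex.I * s), -((q ^ (-a - 1/2) : ℝ) : ℂ)]
    let vzero : Fin 3 → ℂ :=
      ![((q ^ (-(1 : ℝ)/2) : ℝ) : ℂ),
        Complex.I * (((Real.sqrt (q + q⁻¹))⁻¹ * (q ^ a - q ^ (-a)) : ℝ) : ℂ),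
        ((q ^ ((1 : ℝ)/2) : ℝ) : ℂ)]
    let vminus : Fin 3 → ℂ :=
      ![-((q ^ (-a + 1/2) : ℝ) : ℂ), -(Complex.I * s), ((q ^ (a - 1/2) : ℝ) : ℂ)]
    M.mulVec vplus = br (a + 2) • vplus ∧
      M.mulVec vzero = br a • vzero ∧
      M.mulVec vminus = br (a - 2) • vminus ∧
      spectrum ℂ M = {br (a + 2), br a, br (a - 2)} := by
  intro br s M vplus vzero vminus
  have hqne : q ≠ 0 := hq0.ne'
  have hqq : 0 < q + q⁻¹ := by positivity
  have hD : q⁻¹ - q ≠ 0 := by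
    have : q < q⁻¹ := lt_trans hq1 (by exact (one_lt_inv₀ hq0).mpr hq1)
    exact sub_ne_zero.mpr this.ne'
  simp only [br, s, M, vplus, vzero, vminus]
  have hdiv : ∀ x : ℝ, x / (q⁻¹ - q) = x * (q⁻¹ - q)⁻¹ := fun x => div_eq_mul_inv x _
  simp only [hdiv]
  set r : ℝ := q ^ ((1:ℝ)/2) with hr
  set r' : ℝ := q ^ (-(1:ℝ)/2) with hr'
  set u : ℝ := q ^ a with hu
  set u' : ℝ := q ^ (-a) with hu'
  set S : ℝ := Real.sqrt (q + q⁻¹) with hS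
  set S' : ℝ := S⁻¹ with hS'
  set e : ℝ := (q⁻¹ - q)⁻¹ with he0
  -- basic real facts
  have hrr : r * r = q := by
    rw [hr, ← Real.rpow_add hq0]; norm_num
  have hr'r' : r' * r' = q⁻¹ := by
    rw [hr', ← Real.rpow_add hq0]
    norm_num [Real.rpow_neg_one]
  have hrrp : r * r' = 1 := by
    rw [hr, hr', ← Real.rpow_add hq0]
    norm_num
  have huup : u * u' = 1 := by
    rw [hu, hu', ← Real.rpow_add hq0]
    norm_num
  -- rpow splitting lemmas
  have hP2 : q ^ (2:ℝ) = r * r * (r * r) := by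
    rw [hrr, show (2:ℝ) = (1:ℝ) + 1 by norm_num, Real.rpow_add hq0, Real.rpow_one]
  have hPm2 : q ^ (-(2:ℝ)) = r' * r' * (r' * r') := by
    rw [hr'r', show (-(2:ℝ)) = (-(1:ℝ)) + (-1) by norm_num, Real.rpow_add hq0,
      Real.rpow_neg_one]
  have hPp : q ^ (a + 1/2) = u * r := by
    rw [hu, hr, ← Real.rpow_add hq0]
  have hPmp : q ^ (-a - 1/2) = u' * r' := by
    rw [hu', hr', ← Real.rpow_add hq0]
    all_goals (congr 1 <;> ring)
  have hPmp2 : q ^ (-a + 1/2) = u' * r := by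
    rw [hu', hr, ← Real.rpow_add hq0]
    all_goals (congr 1 <;> ring)
  have hPpm : q ^ (a - 1/2) = u * r' := by
    rw [hu, hr', ← Real.rpow_add hq0]
    all_goals (congr 1 <;> ring)
  have hPa2 : q ^ (a + 2) = u * (r * r * (r * r)) := by
    rw [hu, ← hP2, ← Real.rpow_add hq0]
  have hPma2 : q ^ (-(a + 2)) = u' * (r' * r' * (r' * r')) := by
    rw [hu', ← hPm2, ← Real.rpow_add hq0]
    all_goals (congr 1 <;> ring)
  have hPam2 : q ^ (a - 2) = u * (r' * r' * (r' * r')) := by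
    rw [hu, ← hPm2, ← Real.rpow_add hq0]
    all_goals (congr 1 <;> ring)
  have hPmam2 : q ^ (-(a - 2)) = u' * (r * r * (r * r)) := by
    rw [hu', ← hP2, ← Real.rpow_add hq0]
    all_goals (congr 1 <;> ring)
  simp only [hP2, hPm2, hPp, hPmp, hPmp2, hPpm, hPa2, hPma2, hPam2, hPmam2]
  push_cast
  -- complex-level relations
  have hI : Complex.I * Complex.I = -1 := Complex.I_mul_I
  have hSS : (S:ℂ) * S = (r:ℂ) * r + (r':ℂ) * r' := by
    have : S * S = r * r + r' * r' := by
      rw [hS, Real.mul_self_sqrt hqq.le, hrr, hr'r']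
    exact_mod_cast this
  have hSSp : (S:ℂ) * S' = 1 := by
    have hS0 : S ≠ 0 := by
      rw [hS]
      exact (Real.sqrt_pos.mpr hqq).ne'
    have : S * S' = 1 := by rw [hS']; exact mul_inv_cancel₀ hS0
    exact_mod_cast this
  have huupC : (u:ℂ) * u' = 1 := by exact_mod_cast huup
  have hrrpC : (r:ℂ) * r' = 1 := by exact_mod_cast hrrp
  have heC : (e:ℂ) * ((r':ℂ) * r' - (r:ℂ) * r) = 1 := by
    have : e * (r' * r' - r * r) = 1 := by
      rw [hrr, hr'r', he0]
      exact inv_mul_cancel₀ hD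
    exact_mod_cast this
  clear hrr hr'r' hrrp huup hP2 hPm2 hPp hPmp hPmp2 hPpm hPa2 hPma2 hPam2 hPmam2
  refine ⟨?_, ?_, ?_, ?_⟩
  · funext i
    fin_cases i <;>
      simp [Matrix.mulVec, dotProduct, Fin.sum_univ_three]
    · linear_combination ((-1)*(r:ℂ)*(S:ℂ)^2) * hI + ((1)*(r:ℂ)) * hSS + ((-1)*(r:ℂ)*(r':ℂ)^4*(e:ℂ) + (1)*(r:ℂ)^5*(e:ℂ)) * huupC + ((1)*(r':ℂ) + (-1)*(r':ℂ)^3*(e:ℂ) + (1)*(r:ℂ)^2*(r':ℂ)*(e:ℂ)) * hrrpC + ((-1)*(r':ℂ) + (-1)*(r:ℂ)^3) * heC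
    · linear_combination ((1)*(u':ℂ)*(S:ℂ)*(e:ℂ)*Complex.I + (-1)*(u:ℂ)*(S:ℂ)*(e:ℂ)*Complex.I + (1)*(r:ℂ)*(r':ℂ)*(u':ℂ)*(S:ℂ)*(e:ℂ)*Complex.I + (-1)*(r:ℂ)*(r':ℂ)*(u:ℂ)*(S:ℂ)*(e:ℂ)*Complex.I) * hrrpC + ((1)*(r':ℂ)^2*(u':ℂ)*(S:ℂ)*Complex.I + (1)*(r:ℂ)^2*(u:ℂ)*(S:ℂ)*Complex.I) * heC
    · linear_combination ((1)*(r':ℂ)*(S:ℂ)^2) * hI + ((-1)*(r':ℂ)) * hSS + ((1)*(r':ℂ)^5*(e:ℂ) + (-1)*(r:ℂ)^4*(r':ℂ)*(e:ℂ)) * huupC + ((-1)*(r:ℂ) + (1)*(r:ℂ)*(r':ℂ)^2*(e:ℂ) + (-1)*(r:ℂ)^3*(e:ℂ)) * hrrpC + ((1)*(r':ℂ)^3 + (1)*(r:ℂ)) * heC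
  · funext i
    fin_cases i <;>
      simp [Matrix.mulVec, dotProduct, Fin.sum_univ_three]
    · linear_combination ((-1)*(r:ℂ)*(u':ℂ)*(S:ℂ)*(S':ℂ) + (1)*(r:ℂ)*(u:ℂ)*(S:ℂ)*(S':ℂ)) * hI + ((1)*(r:ℂ)*(u':ℂ) + (-1)*(r:ℂ)*(u:ℂ)) * hSSp + ((1)*(r':ℂ)*(u':ℂ)*(e:ℂ) + (-1)*(r':ℂ)*(u:ℂ)*(e:ℂ) + (1)*(r:ℂ)^3*(u':ℂ)*(e:ℂ) + (-1)*(r:ℂ)^3*(u:ℂ)*(e:ℂ)) * hrrpC + ((-1)*(r:ℂ)*(u':ℂ) + (1)*(r:ℂ)*(u:ℂ)) * heC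
    · ring
    · linear_combination ((1)*(r':ℂ)*(u':ℂ)*(S:ℂ)*(S':ℂ) + (-1)*(r':ℂ)*(u:ℂ)*(S:ℂ)*(S':ℂ)) * hI + ((-1)*(r':ℂ)*(u':ℂ) + (1)*(r':ℂ)*(u:ℂ)) * hSSp + ((1)*(r':ℂ)^3*(u':ℂ)*(e:ℂ) + (-1)*(r':ℂ)^3*(u:ℂ)*(e:ℂ) + (1)*(r:ℂ)*(u':ℂ)*(e:ℂ) + (-1)*(r:ℂ)*(u:ℂ)*(e:ℂ)) * hrrpC + ((1)*(r':ℂ)*(u':ℂ) + (-1)*(r':ℂ)*(u:ℂ)) * heC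
  · funext i
    fin_cases i <;>
      simp [Matrix.mulVec, dotProduct, Fin.sum_univ_three]
    · linear_combination ((-1)*(r:ℂ)*(S:ℂ)^2) * hI + ((1)*(r:ℂ)) * hSS + ((-1)*(r:ℂ)*(r':ℂ)^4*(e:ℂ) + (1)*(r:ℂ)^5*(e:ℂ)) * huupC + ((1)*(r':ℂ) + (-1)*(r':ℂ)^3*(e:ℂ) + (1)*(r:ℂ)^2*(r':ℂ)*(e:ℂ)) * hrrpC + ((-1)*(r':ℂ) + (-1)*(r:ℂ)^3) * heC
    · linear_combination ((1)*(u':ℂ)*(S:ℂ)*(e:ℂ)*Complex.I + (-1)*(u:ℂ)*(S:ℂ)*(e:ℂ)*Complex.I + (1)*(r:ℂ)*(r':ℂ)*(u':ℂ)*(S:ℂ)*(e:ℂ)*Complex.I + (-1)*(r:ℂ)*(r':ℂ)*(u:ℂ)*(S:ℂ)*(e:ℂ)*Complex.I) * hrrpC + ((-1)*(r':ℂ)^2*(u:ℂ)*(S:ℂ)*Complex.I + (-1)*(r:ℂ)^2*(u':ℂ)*(S:ℂ)*Complex.I) * heC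
    · linear_combination ((1)*(r':ℂ)*(S:ℂ)^2) * hI + ((-1)*(r':ℂ)) * hSS + ((1)*(r':ℂ)^5*(e:ℂ) + (-1)*(r:ℂ)^4*(r':ℂ)*(e:ℂ)) * huupC + ((-1)*(r:ℂ) + (1)*(r:ℂ)*(r':ℂ)^2*(e:ℂ) + (-1)*(r:ℂ)^3*(e:ℂ)) * hrrpC + ((1)*(r':ℂ)^3 + (1)*(r:ℂ)) * heC
  · apply spec3
    intro z
    linear_combination ((1)*(r':ℂ)^2*(S:ℂ)^2*z + (1)*(r:ℂ)^2*(S:ℂ)^2*z + (-1)*(r:ℂ)^2*(r':ℂ)^4*(u':ℂ)*(S:ℂ)^2*(e:ℂ) + (1)*(r:ℂ)^2*(r':ℂ)^4*(u:ℂ)*(S:ℂ)^2*(e:ℂ) + (-1)*(r:ℂ)^4*(r':ℂ)^2*(u':ℂ)*(S:ℂ)^2*(e:ℂ) + (1)*(r:ℂ)^4*(r':ℂ)^2*(u:ℂ)*(S:ℂ)^2*(e:ℂ)) * hI + ((-1)*(r':ℂ)^2*z + (-1)*(r:ℂ)^2*z + (1)*(r:ℂ)^2*(r':ℂ)^4*(u':ℂ)*(e:ℂ)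 + (-1)*(r:ℂ)^2*(r':ℂ)^4*(u:ℂ)*(e:ℂ) + (1)*(r:ℂ)^4*(r':ℂ)^2*(u':ℂ)*(e:ℂ) + (-1)*(r:ℂ)^4*(r':ℂ)^2*(u:ℂ)*(e:ℂ)) * hSS + ((1)*(r':ℂ)^8*(e:ℂ)^2*z + (-1)*(r':ℂ)^8*(u':ℂ)*(e:ℂ)^3 + (1)*(r':ℂ)^8*(u:ℂ)*(e:ℂ)^3 + (-2)*(r:ℂ)^4*(r':ℂ)^4*(e:ℂ)^2*z + (2)*(r:ℂ)^4*(r':ℂ)^4*(u':ℂ)*(e:ℂ)^3 + (-2)*(r:ℂ)^4*(r':ℂ)^4*(u:ℂ)*(e:ℂ)^3 + (1)*(r:ℂ)^8*(e:ℂ)^2*z + (-1)*(r:ℂ)^8*(u':ℂ)*(e:ℂ)^3 + (1)*(r:ℂ)^8*(u:ℂ)*(e:ℂ)^3) * huupC + ((-2)*z + (2)*(u':ℂ)*(e:ℂ) + (-2)*(u:ℂ)*(e:ℂ) + (1)*(r':ℂ)^2*(e:ℂ)*z + (-1)*(r':ℂ)^2*(u':ℂ)*(e:ℂ)^2 + (1)*(r':ℂ)^2*(u:ℂ)*(e:ℂ)^2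 + (1)*(r':ℂ)^4*(e:ℂ)^2*z + (1)*(r':ℂ)^4*(u':ℂ)*(e:ℂ) + (-1)*(r':ℂ)^4*(u':ℂ)*(e:ℂ)^3 + (-1)*(r':ℂ)^4*(u:ℂ)*(e:ℂ) + (1)*(r':ℂ)^4*(u:ℂ)*(e:ℂ)^3 + (-2)*(r:ℂ)*(r':ℂ)*z + (2)*(r:ℂ)*(r':ℂ)*(u':ℂ)*(e:ℂ) + (-2)*(r:ℂ)*(r':ℂ)*(u:ℂ)*(e:ℂ) + (1)*(r:ℂ)*(r':ℂ)^3*(e:ℂ)*z + (-1)*(r:ℂ)*(r':ℂ)^3*(u':ℂ)*(e:ℂ)^2 + (1)*(r:ℂ)*(r':ℂ)^3*(u:ℂ)*(e:ℂ)^2 + (1)*(r:ℂ)*(r':ℂ)^5*(e:ℂ)^2*z + (1)*(r:ℂ)*(r':ℂ)^5*(u':ℂ)*(e:ℂ) + (-1)*(r:ℂ)*(r':ℂ)^5*(u':ℂ)*(e:ℂ)^3 + (-1)*(r:ℂ)*(r':ℂ)^5*(u:ℂ)*(e:ℂ) + (1)*(r:ℂ)*(r':ℂ)^5*(u:ℂ)*(e:ℂ)^3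 + (-1)*(r:ℂ)^2*(e:ℂ)*z + (1)*(r:ℂ)^2*(u':ℂ)*(e:ℂ)^2 + (-1)*(r:ℂ)^2*(u:ℂ)*(e:ℂ)^2 + (-2)*(r:ℂ)^2*(r':ℂ)^2*(e:ℂ)^2*z + (2)*(r:ℂ)^2*(r':ℂ)^2*(u':ℂ)*(e:ℂ) + (2)*(r:ℂ)^2*(r':ℂ)^2*(u':ℂ)*(e:ℂ)^3 + (-2)*(r:ℂ)^2*(r':ℂ)^2*(u:ℂ)*(e:ℂ) + (-2)*(r:ℂ)^2*(r':ℂ)^2*(u:ℂ)*(e:ℂ)^3 + (-1)*(r:ℂ)^3*(r':ℂ)*(e:ℂ)*z + (1)*(r:ℂ)^3*(r':ℂ)*(u':ℂ)*(e:ℂ)^2 + (-1)*(r:ℂ)^3*(r':ℂ)*(u:ℂ)*(e:ℂ)^2 + (-2)*(r:ℂ)^3*(r':ℂ)^3*(e:ℂ)^2*z + (2)*(r:ℂ)^3*(r':ℂ)^3*(u':ℂ)*(e:ℂ) + (2)*(r:ℂ)^3*(r':ℂ)^3*(u':ℂ)*(e:ℂ)^3 + (-2)*(r:ℂ)^3*(r':ℂ)^3*(u:ℂ)*(e:ℂ)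 + (-2)*(r:ℂ)^3*(r':ℂ)^3*(u:ℂ)*(e:ℂ)^3 + (1)*(r:ℂ)^4*(e:ℂ)^2*z + (1)*(r:ℂ)^4*(u':ℂ)*(e:ℂ) + (-1)*(r:ℂ)^4*(u':ℂ)*(e:ℂ)^3 + (-1)*(r:ℂ)^4*(u:ℂ)*(e:ℂ) + (1)*(r:ℂ)^4*(u:ℂ)*(e:ℂ)^3 + (1)*(r:ℂ)^5*(r':ℂ)*(e:ℂ)^2*z + (1)*(r:ℂ)^5*(r':ℂ)*(u':ℂ)*(e:ℂ) + (-1)*(r:ℂ)^5*(r':ℂ)*(u':ℂ)*(e:ℂ)^3 + (-1)*(r:ℂ)^5*(r':ℂ)*(u:ℂ)*(e:ℂ) + (1)*(r:ℂ)^5*(r':ℂ)*(u:ℂ)*(e:ℂ)^3) * hrrpC + ((2)*z + (-2)*(u':ℂ)*(e:ℂ) + (2)*(u:ℂ)*(e:ℂ) + (1)*(r':ℂ)^2*(e:ℂ)*z + (-1)*(r':ℂ)^2*(u':ℂ)*(e:ℂ)^2 + (1)*(r':ℂ)^2*(u:ℂ)*(e:ℂ)^2 + (1)*(r':ℂ)^4*z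 + (-1)*(r':ℂ)^4*(u':ℂ)*(e:ℂ) + (1)*(r':ℂ)^4*(u:ℂ)*(e:ℂ) + (1)*(r':ℂ)^6*(e:ℂ)*z + (-1)*(r':ℂ)^6*(u':ℂ)*(e:ℂ)^2 + (1)*(r':ℂ)^6*(u:ℂ)*(e:ℂ)^2 + (-1)*(r:ℂ)^2*(e:ℂ)*z + (1)*(r:ℂ)^2*(u':ℂ)*(e:ℂ)^2 + (-1)*(r:ℂ)^2*(u:ℂ)*(e:ℂ)^2 + (1)*(r:ℂ)^4*z + (-1)*(r:ℂ)^4*(u':ℂ)*(e:ℂ) + (1)*(r:ℂ)^4*(u:ℂ)*(e:ℂ) + (-1)*(r:ℂ)^6*(e:ℂ)*z + (1)*(r:ℂ)^6*(u':ℂ)*(e:ℂ)^2 + (-1)*(r:ℂ)^6*(u:ℂ)*(e:ℂ)^2) * heC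
end
end
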